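/- Let f : H → (−∞, +∞] be proper and ρ-convex with ρ ≥ 0 (i.e., f − (ρ/2)‖·‖² is convex), let L : H' → H be a bounded linear operator, and define A = (−L) ∘ (∂f)⁻¹ ∘ (−L*). Then A is (ρ/‖L‖²)-comonotone (when L ≠ 0; if ρ = 0, A is monotone). -/
import Mathlib


open InnerProductSpace

/-- `A` is `σ`-comonotone. -/
def SigmaComonotone {E : Type*} [NormedAddCommGroup E] [InnerProductSpace ℝ E]
    (A : E → Set E) (σ : ℝ) : Prop :=
  ∀ x y u v, u ∈ A x → v ∈ A y → σ * ‖u - v‖ ^ 2 ≤ ⟪x - y, u - v⟫_ℝ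

/-- The subdifferential of a `ρ`-convex function, characterized by the
`ρ`-strong subgradient inequality. -/
def RhoSubdiff {E : Type*} [NormedAddCommGroup E] [InnerProductSpace ℝ E]
    (f : E → EReal) (ρ : ℝ) (x : E) : Set E :=
  {z | ∀ y, f x + ((⟪z, y - x⟫_ℝ + ρ / 2 * ‖y - x‖ ^ 2 : ℝ) : EReal) ≤ f y}

theorem stmt15 {H H' : Type*}
    [NormedAddCommGroup H] [InnerProductSpace ℝ H] [CompleteSpace H]
    [NormedAddCommGroup H'] [InnerProductSpace ℝ H'] [CompleteSpace H']
    (f : H' → EReal) (ρ : ℝ) (hρ : 0 ≤ ρ)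
    (hproper : (∃ x, f x ≠ ⊤) ∧ ∀ x, f x ≠ ⊥)
    (hconv : ∀ x y : H', ∀ t : ℝ, 0 ≤ t → t ≤ 1 →
      f (t • x + (1 - t) • y)
        ≤ (t : EReal) * f x + ((1 - t : ℝ) : EReal) * f y
            - ((ρ / 2 * t * (1 - t) * ‖x - y‖ ^ 2 : ℝ) : EReal))
    (L : H' →L[ℝ] H) (hL : L ≠ 0) :
    SigmaComonotone
      (fun w : H =>
        {p : H | ∃ c : H',
          (-(ContinuousLinearMap.adjoint L w)) ∈ RhoSubdiff f ρ c ∧ p = -(L c)})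
      (ρ / ‖L‖ ^ 2) := by
  intro x y u v hu hv
  obtain ⟨c, hc, rfl⟩ := hu
  obtain ⟨d, hd, rfl⟩ := hv
  obtain ⟨⟨x0, hx0⟩, hbot⟩ := hproper
  -- f c and f d are finite
  have hfin : ∀ (e : H') (z : H'), z ∈ RhoSubdiff f ρ e → f e ≠ ⊤ := by
    intro e z hz htop
    have h1 := hz x0
    rw [htop, EReal.top_add_of_ne_bot (EReal.coe_ne_bot _)] at h1
    exact hx0 (top_le_iff.mp h1)
  have hcT := hfin c _ hc
  have hdT := hfin d _ hd
  set rc := (f c).toReal with hrc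
  set rd := (f d).toReal with hrd
  have hfc : f c = (rc : EReal) := (EReal.coe_toReal hcT (hbot c)).symm
  have hfd : f d = (rd : EReal) := (EReal.coe_toReal hdT (hbot d)).symm
  have h1 := hc d
  have h2 := hd c
  rw [hfc, hfd, ← EReal.coe_add, EReal.coe_le_coe_iff] at h1
  rw [hfc, hfd, ← EReal.coe_add, EReal.coe_le_coe_iff] at h2
  set zc := -(ContinuousLinearMap.adjoint L x) with hzc
  set zd := -(ContinuousLinearMap.adjoint L y) with hzd
  have hnorm : ‖d - c‖ = ‖c - d‖ := by rw [← norm_neg, neg_sub]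
  -- monotonicity of the subdifferential
  have hmono : ρ * ‖c - d‖ ^ 2 ≤ ⟪zc - zd, c - d⟫_ℝ := by
    have hsum : ⟪zc, d - c⟫_ℝ + ⟪zd, c - d⟫_ℝ + ρ * ‖c - d‖ ^ 2 ≤ 0 := by
      rw [hnorm] at h1; nlinarith [h1, h2]
    have : ⟪zc, d - c⟫_ℝ + ⟪zd, c - d⟫_ℝ = -⟪zc - zd, c - d⟫_ℝ := by
      rw [inner_sub_left]
      rw [(neg_sub c d).symm, inner_neg_right]; ring
    linarith [hsum, this ▸ hsum]
  -- rewrite via adjoint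
  have hadj : ⟪zc - zd, c - d⟫_ℝ = ⟪x - y, -(L c) - -(L d)⟫_ℝ := by
    have : zc - zd = -(ContinuousLinearMap.adjoint L (x - y)) := by
      rw [hzc, hzd, map_sub]; abel
    rw [this, inner_neg_left, ContinuousLinearMap.adjoint_inner_left]
    have : (-(L c) - -(L d) : H) = -(L (c - d)) := by rw [map_sub]; abel
    rw [this, inner_neg_right]
  have hLpos : (0:ℝ) < ‖L‖ := norm_pos_iff.mpr hL
  have hbound : ‖-(L c) - -(L d)‖ ≤ ‖L‖ * ‖c - d‖ := by
    have : (-(L c) - -(L d) : H) = -(L (c - d)) := by rw [map_sub]; abel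
    rw [this, norm_neg]
    exact L.le_opNorm _
  have key : ρ / ‖L‖ ^ 2 * ‖-(L c) - -(L d)‖ ^ 2 ≤ ρ * ‖c - d‖ ^ 2 := by
    rw [div_mul_eq_mul_div, div_le_iff₀ (by positivity)]
    have h3 : ‖-(L c) - -(L d)‖ ^ 2 ≤ (‖L‖ * ‖c - d‖) ^ 2 := by
      apply pow_le_pow_left₀ (norm_nonneg _) hbound
    nlinarith [h3, hρ]
  calc ρ / ‖L‖ ^ 2 * ‖-(L c) - -(L d)‖ ^ 2 ≤ ρ * ‖c - d‖ ^ 2 := key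
    _ ≤ ⟪zc - zd, c - d⟫_ℝ := hmono
    _ = ⟪x - y, -(L c) - -(L d)⟫_ℝ := hadj
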